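/- For positive integers n and k ≥ 2, ∫₀¹ x^{2n-1} A(k;x) dx = ∑_{j=1}^{k-1} (-1)^{j-1} T(k+1-j)/(2n)^j + (-1)^{k-1} T_n(1)/(2n)^k, where A(k;x) = 2∑_{m=1}^∞ x^{2m-1}/(2m-1)^k, T(s) = 2∑_{m=1}^∞ 1/(2m-1)^s, and T_n(1) = 2∑_{m=1}^n 1/(2m-1). -/

import Mathlib

/-- The depth-one Kaneko–Tsumura A-function `A(k;x) = 2 ∑_{m≥1} x^{2m-1}/(2m-1)^k`. -/
noncomputable def Afun (k : ℕ) (x : ℝ) : ℝ :=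
  2 * ∑' m : ℕ, x ^ (2 * m + 1) / (2 * (m : ℝ) + 1) ^ k

/-- Depth-one multiple T-value `T(s) = 2 ∑_{m≥1} 1/(2m-1)^s`. -/
noncomputable def Tval (s : ℕ) : ℝ := 2 * ∑' m : ℕ, (1 : ℝ) / (2 * (m : ℝ) + 1) ^ s

/-- `T_n(1) = 2 ∑_{m=1}^n 1/(2m-1)`. -/
noncomputable def Tn1 (n : ℕ) : ℝ := 2 * ∑ m ∈ Finset.Icc 1 n, (1 : ℝ) / (2 * (m : ℝ) - 1)

/-! Expanding `A(k;x)` termwise (dominated convergence, using `k ≥ 2`), the integral becomes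
`S k = ∑ₘ 2 / ((2m+1)^k (2m+1+2n))`. The partial fraction
`1/(a^(k+1)(a+c)) = (1/a^(k+1) - 1/(a^k(a+c)))/c` gives the recursion
`S (k+1) = (T(k+1) - S k)/(2n)`, and `S 1 = T_n(1)/(2n)` because
`∑ₘ (1/(2m+1) - 1/(2m+2n+1))` telescopes to the first `n` odd reciprocals.
Unrolling the recursion down to `S 1` gives the alternating sum. -/

open Finset Filter Topology MeasureTheory

lemma summable_one_div_two_mul_add_one_pow {s : ℕ} (hs : 2 ≤ s) :
    Summable fun m : ℕ => 1 / (2 * (m : ℝ) + 1) ^ s := by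
  have hinj : Function.Injective fun m : ℕ => 2 * m + 1 := fun a b h => by simpa using h
  simpa [Function.comp_def] using
    (Real.summable_one_div_nat_pow.mpr (by omega : 1 < s)).comp_injective hinj

lemma sum_range_sub_shift (f : ℕ → ℝ) (n N : ℕ) :
    ∑ m ∈ range N, (f m - f (m + n)) = ∑ i ∈ range n, f i - ∑ i ∈ range n, f (N + i) := by
  induction N with
  | zero => simp
  | succ N ih =>
    have h := (sum_range_succ' (fun i => f (N + i)) n).symm.trans (sum_range_succ _ n)
    simp only [add_zero, ← add_assoc, add_right_comm N _ 1] at h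
    rw [sum_range_succ, ih]
    linarith

lemma hasSum_sub_shift_of_antitone {f : ℕ → ℝ} (hf : Antitone f)
    (hf0 : Tendsto f atTop (𝓝 0)) (n : ℕ) :
    HasSum (fun m => f m - f (m + n)) (∑ i ∈ range n, f i) := by
  rw [hasSum_iff_tendsto_nat_of_nonneg (fun m => sub_nonneg.mpr (hf (m.le_add_right n)))]
  simp only [sum_range_sub_shift]
  have htail : Tendsto (fun N => ∑ i ∈ range n, f (N + i)) atTop (𝓝 0) := by
    simpa using tendsto_finsetSum (range n) fun i _ => hf0.comp (tendsto_add_atTop_nat i)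
  simpa using htail.const_sub (∑ i ∈ range n, f i)

lemma tendsto_one_div_two_mul_add_one :
    Tendsto (fun m : ℕ => 1 / (2 * (m : ℝ) + 1)) atTop (𝓝 0) := by
  have h : Tendsto (fun m : ℕ => 2 * m + 1) atTop atTop :=
    tendsto_atTop_mono (fun m => by dsimp only [id]; omega) tendsto_id
  simpa [Function.comp_def, one_div] using (tendsto_one_div_atTop_nhds_zero_nat (𝕜 := ℝ)).comp h

lemma Tn1_eq_sum_range (n : ℕ) : Tn1 n = 2 * ∑ i ∈ range n, 1 / (2 * (i : ℝ) + 1) := by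
  rw [Tn1, ← Ico_add_one_right_eq_Icc, sum_Ico_eq_sum_range, Nat.add_sub_cancel]
  congr 1
  refine sum_congr rfl fun i _ => ?_
  push_cast
  ring_nf

lemma hasSum_two_div_odd_mul_odd_add {n : ℕ} (hn : 0 < n) :
    HasSum (fun m : ℕ => 2 / ((2 * (m : ℝ) + 1) ^ 1 * (2 * m + 1 + 2 * n)))
      (Tn1 n / (2 * n)) := by
  have hanti : Antitone fun m : ℕ => 1 / (2 * (m : ℝ) + 1) := fun a b hab => by
    dsimp only
    gcongr
  have h := ((hasSum_sub_shift_of_antitone hanti tendsto_one_div_two_mul_add_one n).mul_left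
    2).div_const (2 * (n : ℝ))
  rw [Tn1_eq_sum_range]
  refine h.congr_fun fun m => ?_
  field_simp
  push_cast
  ring

lemma hasSum_Tval {s : ℕ} (hs : 2 ≤ s) :
    HasSum (fun m : ℕ => 2 * (1 / (2 * (m : ℝ) + 1) ^ s)) (Tval s) :=
  (summable_one_div_two_mul_add_one_pow hs).hasSum.mul_left 2

lemma hasSum_two_div_odd_pow_succ_mul_odd_add {c : ℝ} (hc : 0 < c) {k : ℕ} (hk : 1 ≤ k)
    {s : ℝ} (hs : HasSum (fun m : ℕ => 2 / ((2 * (m : ℝ) + 1) ^ k * (2 * m + 1 + c))) s) :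
    HasSum (fun m : ℕ => 2 / ((2 * (m : ℝ) + 1) ^ (k + 1) * (2 * m + 1 + c)))
      ((Tval (k + 1) - s) / c) := by
  refine (((hasSum_Tval (by omega)).sub hs).div_const c).congr_fun fun m => ?_
  field_simp
  ring

-- The right-hand side for `k = K + 1`, with `t` in place of `T` and `r` in place of `T_n(1)`.
noncomputable def alternatingExpansion (t : ℕ → ℝ) (r c : ℝ) (K : ℕ) : ℝ :=
  ∑ j ∈ Icc 1 K, (-1) ^ (j - 1) * t (K + 2 - j) / c ^ j + (-1) ^ K * r / c ^ (K + 1)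

lemma alternatingExpansion_zero (t : ℕ → ℝ) (r c : ℝ) :
    alternatingExpansion t r c 0 = r / c := by
  simp [alternatingExpansion]

lemma alternatingExpansion_succ (t : ℕ → ℝ) (r c : ℝ) (K : ℕ) :
    alternatingExpansion t r c (K + 1) = (t (K + 2) - alternatingExpansion t r c K) / c := by
  have hsplit : ∑ j ∈ Icc 1 (K + 1), (-1 : ℝ) ^ (j - 1) * t (K + 1 + 2 - j) / c ^ j
      = t (K + 2) / c - (∑ j ∈ Icc 1 K, (-1) ^ (j - 1) * t (K + 2 - j) / c ^ j) / c := by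
    rw [← insert_Icc_succ_left_eq_Icc (by omega), sum_insert (by simp), Order.succ_eq_add_one,
      ← map_add_right_Icc 1 K 1, sum_map, sum_div, sub_eq_add_neg, ← sum_neg_distrib]
    congr 1
    · simp
    refine sum_congr rfl fun j hj => ?_
    obtain ⟨i, rfl⟩ : ∃ i, j = i + 1 := ⟨j - 1, by simp only [mem_Icc] at hj; omega⟩
    simp only [addRightEmbedding_apply, Nat.add_sub_cancel, pow_succ]
    rw [show K + 1 + 2 - (i + 1 + 1) = K + 2 - (i + 1) by omega]
    ring
  rw [alternatingExpansion, alternatingExpansion, hsplit, pow_succ (-1 : ℝ) K, pow_succ c (K + 1)]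
  ring

lemma hasSum_two_div_odd_pow_mul_odd_add {n : ℕ} (hn : 0 < n) (K : ℕ) :
    HasSum (fun m : ℕ => 2 / ((2 * (m : ℝ) + 1) ^ (K + 1) * (2 * m + 1 + 2 * n)))
      (alternatingExpansion Tval (Tn1 n) (2 * n) K) := by
  induction K with
  | zero => simpa [alternatingExpansion_zero] using hasSum_two_div_odd_mul_odd_add hn
  | succ K ih =>
    rw [alternatingExpansion_succ]
    exact hasSum_two_div_odd_pow_succ_mul_odd_add (by positivity) (by omega) ih

lemma norm_pow_odd_div_le {x : ℝ} (hx : |x| ≤ 1) (k m : ℕ) :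
    ‖x ^ (2 * m + 1) / (2 * (m : ℝ) + 1) ^ k‖ ≤ 1 / (2 * (m : ℝ) + 1) ^ k := by
  rw [norm_div, norm_pow, norm_pow, Real.norm_eq_abs, Real.norm_eq_abs,
    abs_of_pos (by positivity : (0 : ℝ) < 2 * m + 1)]
  gcongr
  exact pow_le_one₀ (abs_nonneg x) hx

lemma hasSum_Afun {k : ℕ} (hk : 2 ≤ k) {x : ℝ} (hx : |x| ≤ 1) :
    HasSum (fun m : ℕ => 2 * (x ^ (2 * m + 1) / (2 * (m : ℝ) + 1) ^ k)) (Afun k x) :=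
  ((summable_one_div_two_mul_add_one_pow hk).of_norm_bounded
    (norm_pow_odd_div_le hx k)).hasSum.mul_left 2

lemma abs_le_one_of_mem_uIoc {x : ℝ} (hx : x ∈ Set.uIoc 0 1) : |x| ≤ 1 := by
  rw [Set.uIoc_of_le zero_le_one] at hx
  exact abs_le.mpr ⟨by linarith [hx.1], hx.2⟩

lemma integral_pow_mul_odd_term {n : ℕ} (hn : 0 < n) (k m : ℕ) :
    ∫ x in (0 : ℝ)..1, x ^ (2 * n - 1) * (2 * (x ^ (2 * m + 1) / (2 * (m : ℝ) + 1) ^ k))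
      = 2 / ((2 * (m : ℝ) + 1) ^ k * (2 * m + 1 + 2 * n)) := by
  have hpow : ∀ x : ℝ, x ^ (2 * n - 1) * (2 * (x ^ (2 * m + 1) / (2 * (m : ℝ) + 1) ^ k))
      = 2 / (2 * (m : ℝ) + 1) ^ k * x ^ (2 * (m + n)) := by
    intro x
    rw [show 2 * (m + n) = 2 * n - 1 + (2 * m + 1) by omega, pow_add]
    ring
  simp only [hpow, intervalIntegral.integral_const_mul, integral_pow]
  push_cast
  field_simp
  ring

lemma hasSum_integral_pow_mul_Afun {n k : ℕ} (hn : 0 < n) (hk : 2 ≤ k) :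
    HasSum (fun m : ℕ => 2 / ((2 * (m : ℝ) + 1) ^ k * (2 * m + 1 + 2 * n)))
      (∫ x in (0 : ℝ)..1, x ^ (2 * n - 1) * Afun k x) := by
  simp only [← integral_pow_mul_odd_term hn k]
  refine intervalIntegral.hasSum_integral_of_dominated_convergence
    (fun m _ => 2 * (1 / (2 * (m : ℝ) + 1) ^ k)) (fun m => by fun_prop) (fun m => ?_)
    (ae_of_all _ fun _ _ => (hasSum_Tval hk).summable) intervalIntegrable_const
    (ae_of_all _ fun x hx => (hasSum_Afun hk ?_).mul_left _)
  · refine ae_of_all _ fun x hx => ?_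
    have hx1 := abs_le_one_of_mem_uIoc hx
    rw [norm_mul, norm_mul, norm_pow, Real.norm_ofNat]
    calc ‖x‖ ^ (2 * n - 1) * (2 * ‖x ^ (2 * m + 1) / (2 * (m : ℝ) + 1) ^ k‖)
        ≤ 1 * (2 * (1 / (2 * (m : ℝ) + 1) ^ k)) := by
          gcongr
          · exact pow_le_one₀ (norm_nonneg x) hx1
          · exact norm_pow_odd_div_le hx1 k m
      _ = _ := one_mul _
  · exact abs_le_one_of_mem_uIoc hx

theorem stmt10 (n k : ℕ) (hn : 0 < n) (hk : 2 ≤ k) :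
    ∫ x in (0:ℝ)..1, x ^ (2 * n - 1) * Afun k x
      = (∑ j ∈ Finset.Icc 1 (k - 1), (-1 : ℝ) ^ (j - 1) * Tval (k + 1 - j) / (2 * (n : ℝ)) ^ j)
        + (-1 : ℝ) ^ (k - 1) * Tn1 n / (2 * (n : ℝ)) ^ k := by
  obtain ⟨K, rfl⟩ : ∃ K, k = K + 1 := ⟨k - 1, by omega⟩
  rw [(hasSum_integral_pow_mul_Afun hn hk).unique (hasSum_two_div_odd_pow_mul_odd_add hn K)]
  rfl
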